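/- arXiv:2105.13595 — 3 statements merged into one kernel-verified Lean document; each statement's English description precedes it below -/
import Mathlib

section
/- Let L_d = σ^d(0). Then L_d has length 2^{d+1} - 1, and for every d ≥ 4, δ(L_d) ≥ (d-1)/8. In particular, the family {L_d : d ∈ ℕ} satisfies δ(L_d) = Ω(log n), where n = |L_d|, even though every member of the family is generated by an L-system of constant size. -/
/-- The morphism σ on {0,1} (0 ↦ false, 1 ↦ true) with σ(0) = 001 and σ(1) = 1,
given by its images on symbols. -/
def sigmaRule : Bool → List Bool
  | false => [false, false, true]
  | true => [true]

/-- The homomorphic extension of σ to strings. -/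
def sigmaM (w : List Bool) : List Bool := w.flatMap sigmaRule


/-- `subCount w k`: the number of distinct substrings of length `k` of `w`. -/
def subCount (w : List Bool) (k : ℕ) : ℕ :=
  (((w.tails.map (fun t => t.take k)).filter (fun s => s.length == k)).dedup).length

/-- The measure δ(w) = max{ S_w(k)/k : 1 ≤ k ≤ |w| }, as a real number. -/
noncomputable def deltaM (w : List Bool) : ℝ :=
  sSup { x : ℝ | ∃ k, 1 ≤ k ∧ k ≤ w.length ∧ x = (subCount w k : ℝ) / k }

/-- The homomorphic extension of a morphism `R : V → V⁺` to strings. -/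
def morphApply {V : Type} (R : V → List V) (w : List V) : List V := w.flatMap R

/-- An L-system `(V, R, S, τ, d, n)`: a rule per symbol, an axiom, a coding `τ`,
a level `d` where to stop, and the length `n` of the string to generate. -/
structure LSystem (V Γ : Type) where
  R : V → List V
  ax : List V
  coding : V → Γ
  d : ℕ
  n : ℕ

/-- The levels of an L-system: `L_0 = S` and `L_{i+1} = R(L_i)`. -/
def LSystem.level {V Γ : Type} (L : LSystem V Γ) (i : ℕ) : List V :=
  (morphApply L.R)^[i] L.ax

/-- Well-formedness: nonempty axiom and nonempty right-hand sides. -/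
def LSystem.WF {V Γ : Type} (L : LSystem V Γ) : Prop :=
  L.ax ≠ [] ∧ ∀ A, L.R A ≠ []

/-- The size of an L-system: `|S| + Σ_{A ∈ V} |R(A)|`. -/
def LSystem.size {V Γ : Type} [Fintype V] (L : LSystem V Γ) : ℕ :=
  L.ax.length + ∑ A, (L.R A).length

/-- The L-system generates `w = τ(L_d[1,n])`, the coding applied to the
length-`n` prefix of level `d`. -/
def LGenerates {V Γ : Type} (L : LSystem V Γ) (w : List Γ) : Prop :=
  w = ((L.level L.d).take L.n).map L.coding

/-- `ℓ(w)`: the size of the smallest L-system generating `w`. -/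
noncomputable def lMeasure {Γ : Type} (w : List Γ) : ℕ :=
  sInf { s | ∃ v, ∃ L : LSystem (Fin v) Γ, L.WF ∧ LGenerates L w ∧ L.size = s }

/-!
`L_{d+1} = L_d L_d 1`, and `L_d` ends with the block `0 1^d`, which occurs nowhere else in `L_d`.
For `j₀ ≤ j < d` and a shift `o`, the boundary of `L_j L_j` inside `L_{j+1}` carries a factor of
length `k ≤ 2^j₀` of the form `P 0 1^j Y` with `|P| = o` and `Y` a prefix of `L_{j₀}` too short to
contain `0 1^j₀`. Its last occurrence of `0 1^j₀` is at `o`, and the run of ones there has length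
`j`, so these `(d - j₀)(k - d)` factors are distinct. Taking `k = 2d` and `j₀ = ⌈log₂ 2d⌉` gives
`S(2d)/2d ≥ (d - j₀)/2 ≥ (d - 1)/8`; as `|L_d| < 2^(d+1)` this is `Ω(log |L_d|)`. Every `L_d` is
generated by the L-system `0 ↦ 001, 1 ↦ 1` with axiom `0`, of size 5.
-/

open List

theorem sigmaM_append (a b : List Bool) : sigmaM (a ++ b) = sigmaM a ++ sigmaM b :=
  flatMap_append

theorem sigmaM_iterate_append (d : ℕ) (a b : List Bool) :
    sigmaM^[d] (a ++ b) = sigmaM^[d] a ++ sigmaM^[d] b := by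
  induction d generalizing a b with
  | zero => rfl
  | succ d ih => simp only [Function.iterate_succ_apply, sigmaM_append, ih]

theorem sigmaM_iterate_true (d : ℕ) : sigmaM^[d] [true] = [true] :=
  Function.iterate_fixed rfl d

/-- `L_d = σ^d(0)`. -/
def sigmaWord (d : ℕ) : List Bool := sigmaM^[d] [false]

theorem sigmaWord_zero : sigmaWord 0 = [false] := rfl

theorem sigmaWord_succ (d : ℕ) : sigmaWord (d + 1) = sigmaWord d ++ (sigmaWord d ++ [true]) := by
  rw [sigmaWord, Function.iterate_succ_apply, show sigmaM [false] = [false] ++ ([false] ++ [true])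
    from rfl, sigmaM_iterate_append, sigmaM_iterate_append, sigmaM_iterate_true]
  rfl

theorem length_sigmaWord (d : ℕ) : (sigmaWord d).length = 2 ^ (d + 1) - 1 := by
  induction d with
  | zero => rfl
  | succ d ih =>
    have := Nat.one_le_two_pow (n := d + 1)
    rw [sigmaWord_succ, length_append, length_append, ih, length_singleton, pow_succ]
    omega

theorem two_pow_le_length_sigmaWord (j : ℕ) : 2 ^ j ≤ (sigmaWord j).length := by
  rw [length_sigmaWord, pow_succ]
  have := Nat.one_le_two_pow (n := j)
  omega

theorem sigmaWord_prefix_sigmaWord {a b : ℕ} (h : a ≤ b) : sigmaWord a <+: sigmaWord b := by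
  induction b, h using Nat.le_induction with
  | base => exact prefix_rfl
  | succ b _ ih => exact ih.trans (sigmaWord_succ b ▸ prefix_append _ _)

theorem sigmaWord_eq_false_cons (d : ℕ) : ∃ t, sigmaWord d = false :: t := by
  obtain ⟨t, ht⟩ := sigmaWord_prefix_sigmaWord d.zero_le
  exact ⟨t, ht.symm⟩

def zeroOnes (r : ℕ) : List Bool := false :: replicate r true

theorem length_zeroOnes (r : ℕ) : (zeroOnes r).length = r + 1 := by simp [zeroOnes]

theorem zeroOnes_prefix_zeroOnes {r s : ℕ} (h : r ≤ s) : zeroOnes r <+: zeroOnes s :=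
  cons_prefix_cons.2 ⟨rfl, replicate (s - r) true, by rw [replicate_append_replicate]; congr 1; omega⟩

theorem zeroOnes_suffix_sigmaWord (d : ℕ) : zeroOnes d <:+ sigmaWord d := by
  induction d with
  | zero => exact suffix_rfl
  | succ d ih =>
    obtain ⟨p, hp⟩ := ih
    refine ⟨sigmaWord d ++ p, ?_⟩
    rw [sigmaWord_succ, ← hp, zeroOnes, zeroOnes, replicate_succ']
    simp

theorem getElem_zeroOnes_succ {r i : ℕ} (hi : i + 1 < (zeroOnes r).length) :
    (zeroOnes r)[i + 1] = true := by
  simp [zeroOnes]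

/-- By induction, an occurrence of `0 1^(r+1)` in `L_r L_r 1` lying inside a copy of `L_r` would end
that copy; so it either ends the word or covers the `0` that begins the second copy. -/
theorem add_succ_eq_length_of_zeroOnes_prefix_drop {r q : ℕ}
    (h : zeroOnes r <+: (sigmaWord r).drop q) :
    q + (r + 1) = (sigmaWord r).length := by
  induction r generalizing q with
  | zero =>
    have := h.length_le
    simp only [length_zeroOnes, sigmaWord_zero, length_drop, length_singleton] at this ⊢
    omega
  | succ r ih =>
    set N := (sigmaWord r).length
    have hlen := h.length_le
    rw [length_drop, length_zeroOnes] at hlen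
    rw [sigmaWord_succ] at h hlen ⊢
    simp only [length_append, length_singleton] at hlen ⊢
    by_cases hq : N ≤ q
    · rw [drop_append, drop_eq_nil_of_le hq, nil_append, drop_append,
        Nat.sub_eq_zero_of_le (by omega : q - N ≤ N)] at h
      have := ih (prefix_of_prefix_length_le ((zeroOnes_prefix_zeroOnes r.le_succ).trans h)
        (prefix_append _ _) (by simp [length_zeroOnes]; omega))
      omega
    · exfalso
      have hcover : N - q ≤ r + 1 := by
        by_cases hfit : q + (r + 1) ≤ N
        · rw [drop_append, Nat.sub_eq_zero_of_le (by omega : q ≤ N), drop_zero] at h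
          have := ih (prefix_of_prefix_length_le ((zeroOnes_prefix_zeroOnes r.le_succ).trans h)
            (prefix_append _ _) (by simp [length_zeroOnes]; omega))
          omega
        · omega
      obtain ⟨t, ht⟩ := sigmaWord_eq_false_cons r
      have key := h.getElem (i := N - q) (by rw [length_zeroOnes]; omega)
      obtain ⟨i, hi⟩ : ∃ i, N - q = i + 1 := ⟨N - q - 1, by omega⟩
      simp only [hi, getElem_zeroOnes_succ, getElem_drop] at key
      rw [getElem_append_right (by omega), getElem_append_left (by omega)] at key
      simp only [show q + (i + 1) - (sigmaWord r).length = 0 by omega] at key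
      simp [ht] at key

theorem not_zeroOnes_prefix_drop_take {r n q : ℕ} (hn : n < (sigmaWord r).length) :
    ¬ zeroOnes r <+: ((sigmaWord r).take n).drop q := by
  intro h
  rw [drop_take] at h
  have hocc := add_succ_eq_length_of_zeroOnes_prefix_drop (h.trans (take_prefix _ _))
  have hlen := h.length_le
  simp only [length_zeroOnes, length_take, length_drop] at hlen
  omega

theorem eq_of_replicate_append_cons_eq {α : Type*} {a b : α} (hab : a ≠ b) {j j' : ℕ}
    {l l' : List α} (h : replicate j a ++ b :: l = replicate j' a ++ b :: l') : j = j' := by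
  induction j generalizing j' with
  | zero => cases j' <;> simp_all [replicate_succ, eq_comm]
  | succ j ih => cases j' <;> simp_all [replicate_succ]

theorem le_length_of_false_cons_prefix_drop {P Y s : List Bool} {j q : ℕ}
    (hY : ∀ i, ¬ (false :: s) <+: Y.drop i)
    (h : (false :: s) <+: (P ++ (zeroOnes j ++ Y)).drop q) : q ≤ P.length := by
  by_contra hq
  rw [drop_append, drop_eq_nil_of_le (by omega), nil_append, zeroOnes, cons_append,
    show q - P.length = (q - P.length - 1) + 1 by omega, drop_succ_cons, drop_append] at h
  by_cases hrun : q - P.length - 1 < j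
  · rw [drop_replicate, show j - (q - P.length - 1) = (j - (q - P.length - 1) - 1) + 1 by omega,
      replicate_succ, length_replicate, Nat.sub_eq_zero_of_le hrun.le, drop_zero] at h
    simp at h
  · rw [drop_eq_nil_of_le (by simp; omega), nil_append] at h
    exact hY _ h

theorem infix_append_of_suffix_of_prefix {α : Type*} {s t l₁ l₂ : List α} (hs : s <:+ l₁)
    (ht : t <+: l₂) : s ++ t <:+: l₁ ++ l₂ := by
  obtain ⟨a, rfl⟩ := hs
  obtain ⟨b, rfl⟩ := ht
  exact ⟨a, b, by simp⟩

section Window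

variable {j₀ k : ℕ}

/-- The factor of `L_j L_j` of length `k` that starts `o` letters before the final block `0 1^j`
of the first copy, with the second copy read as a prefix of `L_{j₀}`. -/
def window (j₀ k j o : ℕ) : List Bool :=
  (sigmaWord j).drop ((sigmaWord j).length - (o + j + 1)) ++ (sigmaWord j₀).take (k - (o + j + 1))

theorem exists_window_eq_append_zeroOnes {j o : ℕ} (ho : o + j + 1 ≤ (sigmaWord j).length) :
    ∃ P : List Bool, P.length = o ∧
      window j₀ k j o = P ++ (zeroOnes j ++ (sigmaWord j₀).take (k - (o + j + 1))) := by
  obtain ⟨p, hp⟩ := zeroOnes_suffix_sigmaWord j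
  rw [← hp, length_append, length_zeroOnes] at ho
  refine ⟨p.drop (p.length - o), by simp; omega, ?_⟩
  rw [window, ← hp, length_append, length_zeroOnes, drop_append,
    show p.length + (j + 1) - (o + j + 1) = p.length - o by omega,
    Nat.sub_eq_zero_of_le (Nat.sub_le _ _), drop_zero, append_assoc]

theorem length_window {j o : ℕ} (hk : k ≤ 2 ^ j₀) (hj : j₀ ≤ j) (ho : o + j + 1 ≤ k) :
    (window j₀ k j o).length = k := by
  have h₀ := two_pow_le_length_sigmaWord j₀
  have h := (sigmaWord_prefix_sigmaWord hj).length_le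
  simp only [window, length_append, length_drop, length_take]
  omega

theorem window_infix_sigmaWord {d j o : ℕ} (hj : j₀ ≤ j) (hjd : j < d) :
    window j₀ k j o <:+: sigmaWord d := by
  have htake : (sigmaWord j₀).take (k - (o + j + 1)) <+: sigmaWord j :=
    (take_prefix _ _).trans (sigmaWord_prefix_sigmaWord hj)
  have hdouble : sigmaWord j ++ sigmaWord j <+: sigmaWord d :=
    IsPrefix.trans ⟨[true], by rw [append_assoc, ← sigmaWord_succ]⟩ (sigmaWord_prefix_sigmaWord hjd)
  exact (infix_append_of_suffix_of_prefix (drop_suffix _ _) htake).trans hdouble.isInfix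

theorem window_injective {j o j' o' : ℕ} (hk : k ≤ 2 ^ j₀) (hj : j₀ ≤ j) (hj' : j₀ ≤ j')
    (ho : o + j + 2 ≤ k) (ho' : o' + j' + 2 ≤ k) (h : window j₀ k j o = window j₀ k j' o') :
    j = j' ∧ o = o' := by
  have hshort : ∀ {i}, k - i < (sigmaWord j₀).length := fun {i} => by
    have := two_pow_le_length_sigmaWord j₀
    have := Nat.one_le_two_pow (n := j₀)
    rw [length_sigmaWord, pow_succ]
    omega
  have hlong : ∀ {j o}, j₀ ≤ j → o + j + 2 ≤ k → o + j + 1 ≤ (sigmaWord j).length :=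
    fun hj ho => by
      have := (sigmaWord_prefix_sigmaWord hj).length_le
      have := two_pow_le_length_sigmaWord j₀
      omega
  obtain ⟨P, hP, hw⟩ := exists_window_eq_append_zeroOnes (j₀ := j₀) (k := k) (hlong hj ho)
  obtain ⟨P', hP', hw'⟩ := exists_window_eq_append_zeroOnes (j₀ := j₀) (k := k) (hlong hj' ho')
  have hocc : ∀ {j P Y w}, j₀ ≤ j → w = P ++ (zeroOnes j ++ Y) → zeroOnes j₀ <+: w.drop P.length :=
    fun hj hw => by
      rw [hw, drop_left]
      exact (zeroOnes_prefix_zeroOnes hj).trans (prefix_append _ _)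
  have hY : ∀ m i, ¬ zeroOnes j₀ <+: ((sigmaWord j₀).take (k - m)).drop i :=
    fun _ _ => not_zeroOnes_prefix_drop_take hshort
  have hoo : o = o' := by
    have h₁ := hocc hj (h ▸ hw)
    have h₂ := hocc hj' (h.symm ▸ hw')
    rw [hw'] at h₁
    rw [hw] at h₂
    rw [← hP, ← hP']
    exact le_antisymm (le_length_of_false_cons_prefix_drop (hY _) h₁)
      (le_length_of_false_cons_prefix_drop (hY _) h₂)
  subst hoo
  refine ⟨?_, rfl⟩
  have hsame := congrArg (drop o) (hw.symm.trans (h.trans hw'))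
  rw [drop_left' hP, drop_left' hP'] at hsame
  obtain ⟨t, ht⟩ := sigmaWord_eq_false_cons j₀
  rw [ht, show k - (o + j + 1) = (k - (o + j + 1) - 1) + 1 by omega,
    show k - (o + j' + 1) = (k - (o + j' + 1) - 1) + 1 by omega, take_succ_cons,
    take_succ_cons, zeroOnes, zeroOnes, cons_append, cons_append] at hsame
  exact eq_of_replicate_append_cons_eq (by decide) (cons_injective hsame)

end Window

theorem card_le_subCount {w : List Bool} {k : ℕ} (T : Finset (List Bool))
    (hT : ∀ s ∈ T, s <:+: w ∧ s.length = k) : T.card ≤ subCount w k := by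
  classical
  rw [subCount, ← card_toFinset]
  refine Finset.card_le_card fun s hs => ?_
  obtain ⟨hinf, hlen⟩ := hT s hs
  obtain ⟨t, hst, hts⟩ := infix_iff_prefix_suffix.1 hinf
  simp only [mem_toFinset, mem_filter, mem_map, mem_tails, beq_iff_eq]
  exact ⟨⟨t, hts, by rw [prefix_iff_eq_take.1 hst, hlen]⟩, hlen⟩

theorem subCount_le_length_add_one (w : List Bool) (k : ℕ) : subCount w k ≤ w.length + 1 :=
  calc subCount w k ≤ ((w.tails.map (·.take k)).filter (·.length == k)).length :=
        (dedup_sublist _).length_le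
    _ ≤ (w.tails.map (·.take k)).length := length_filter_le _ _
    _ = w.length + 1 := by simp

theorem subCount_div_le_deltaM {w : List Bool} {k : ℕ} (hk : 1 ≤ k) (hkw : k ≤ w.length) :
    (subCount w k : ℝ) / k ≤ deltaM w := by
  refine le_csSup ⟨w.length + 1, ?_⟩ ⟨k, hk, hkw, rfl⟩
  rintro x ⟨k', hk', -, rfl⟩
  calc (subCount w k' : ℝ) / k' ≤ subCount w k' :=
        div_le_self (by positivity) (by exact_mod_cast hk')
    _ ≤ w.length + 1 := by exact_mod_cast subCount_le_length_add_one w k'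

theorem mul_le_subCount_sigmaWord {d j₀ k : ℕ} (hk : k ≤ 2 ^ j₀) :
    (d - j₀) * (k - d) ≤ subCount (sigmaWord d) k := by
  set T := Finset.Ico j₀ d ×ˢ Finset.range (k - d)
  have hT : ∀ x ∈ T, j₀ ≤ x.1 ∧ x.1 < d ∧ x.2 + x.1 + 2 ≤ k := by
    intro x hx
    simp only [T, Finset.mem_product, Finset.mem_Ico, Finset.mem_range] at hx
    omega
  calc (d - j₀) * (k - d) = T.card := by simp [T]
    _ = (T.image fun x => window j₀ k x.1 x.2).card := by
        refine (Finset.card_image_of_injOn fun x hx y hy hxy => ?_).symm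
        obtain ⟨hx₁, -, hx₂⟩ := hT x hx
        obtain ⟨hy₁, -, hy₂⟩ := hT y hy
        obtain ⟨h₁, h₂⟩ := window_injective hk hx₁ hy₁ hx₂ hy₂ hxy
        exact Prod.ext h₁ h₂
    _ ≤ subCount (sigmaWord d) k := card_le_subCount _ fun s hs => by
        obtain ⟨x, hx, rfl⟩ := Finset.mem_image.1 hs
        obtain ⟨hx₁, hxd, hx₂⟩ := hT x hx
        exact ⟨window_infix_sigmaWord hx₁ hxd, length_window hk hx₁ (by omega)⟩

theorem two_mul_le_two_pow (d : ℕ) (hd : 4 ≤ d) : 2 * d ≤ 2 ^ ((3 * d + 1) / 4) := by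
  induction d using Nat.strong_induction_on with
  | _ d ih =>
    by_cases hsmall : d < 12
    · interval_cases d <;> decide
    · have h := ih (d - 4) (by omega) (by omega)
      rw [show (3 * d + 1) / 4 = (3 * (d - 4) + 1) / 4 + 3 by omega, pow_add]
      omega

theorem sub_one_div_eight_le_deltaM_sigmaWord {d : ℕ} (hd : 4 ≤ d) :
    ((d : ℝ) - 1) / 8 ≤ deltaM (sigmaWord d) := by
  set j₀ := Nat.clog 2 (2 * d)
  have hk : 2 * d ≤ 2 ^ j₀ := Nat.le_pow_clog (by norm_num) _
  have hj₀ : 4 * j₀ ≤ 3 * d + 1 := by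
    have := (Nat.clog_le_iff_le_pow (by norm_num)).2 (two_mul_le_two_pow d hd)
    omega
  have hcount := mul_le_subCount_sigmaWord (d := d) hk
  have hklen : 2 * d ≤ (sigmaWord d).length := by
    have := Nat.lt_two_pow_self (n := d)
    rw [length_sigmaWord, pow_succ]
    omega
  have hS : ((d : ℝ) - j₀) * d ≤ subCount (sigmaWord d) (2 * d) := by
    rw [show 2 * d - d = d by omega] at hcount
    have := (Nat.cast_le (α := ℝ)).2 hcount
    push_cast [Nat.cast_sub (by omega : j₀ ≤ d)] at this
    exact this
  have hj₀' : 4 * (j₀ : ℝ) ≤ 3 * d + 1 := by exact_mod_cast hj₀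
  calc ((d : ℝ) - 1) / 8 ≤ (subCount (sigmaWord d) (2 * d) : ℝ) / (2 * d : ℕ) := by
        rw [le_div_iff₀ (by positivity)]
        push_cast
        nlinarith
    _ ≤ deltaM (sigmaWord d) := subCount_div_le_deltaM (by omega) hklen

theorem logb_length_sigmaWord_le (d : ℕ) : Real.logb 2 (sigmaWord d).length ≤ d + 1 := by
  have hpos : 0 < (sigmaWord d).length := (two_pow_le_length_sigmaWord d).trans_lt' (by positivity)
  rw [Real.logb_le_iff_le_rpow (by norm_num) (by exact_mod_cast hpos),
    show ((d : ℝ) + 1) = ((d + 1 : ℕ) : ℝ) by push_cast; ring, Real.rpow_natCast]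
  exact_mod_cast (length_sigmaWord d).trans_le (Nat.sub_le _ _)

def sigmaRuleFin : Fin 2 → List (Fin 2) := ![[0, 0, 1], [1]]

def sigmaLSystem (d : ℕ) : LSystem (Fin 2) Bool where
  R := sigmaRuleFin
  ax := [0]
  coding := ![false, true]
  d := d
  n := ((morphApply sigmaRuleFin)^[d] [0]).length

theorem map_level_sigmaLSystem (d : ℕ) :
    ((sigmaLSystem d).level d).map (sigmaLSystem d).coding = sigmaWord d := by
  induction d with
  | zero => rfl
  | succ d ih =>
    simp only [LSystem.level, sigmaLSystem, sigmaWord, Function.iterate_succ_apply'] at ih ⊢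
    rw [← ih, morphApply, sigmaM, map_flatMap, flatMap_map]
    congr 1
    funext a
    fin_cases a <;> rfl

theorem lMeasure_sigmaWord_le (d : ℕ) : lMeasure (sigmaWord d) ≤ 5 := by
  refine Nat.sInf_le ⟨2, sigmaLSystem d, ⟨by simp [sigmaLSystem], fun A => ?_⟩, ?_, rfl⟩
  · fin_cases A <;> simp [sigmaLSystem, sigmaRuleFin]
  · rw [LGenerates, ← map_level_sigmaLSystem d]
    exact congrArg (map _) take_length.symm

/-- Let L_d = σ^d(0). Then |L_d| = 2^{d+1} - 1; for every d ≥ 4,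
δ(L_d) ≥ (d-1)/8; in particular δ(L_d) = Ω(log n) where n = |L_d| — even
though every member of the family {L_d : d ∈ ℕ} is generated by an L-system
of constant size. -/
theorem delta_omega_log_family :
    (∀ d : ℕ, (sigmaM^[d] [false]).length = 2 ^ (d + 1) - 1) ∧
    (∀ d : ℕ, 4 ≤ d → ((d : ℝ) - 1) / 8 ≤ deltaM (sigmaM^[d] [false])) ∧
    (∃ c : ℝ, 0 < c ∧ ∀ d : ℕ, 4 ≤ d →
      c * Real.logb 2 ((sigmaM^[d] [false]).length : ℝ)
        ≤ deltaM (sigmaM^[d] [false])) ∧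
    (∃ C : ℕ, ∀ d : ℕ, lMeasure (sigmaM^[d] [false]) ≤ C) := by
  refine ⟨length_sigmaWord, fun d hd => sub_one_div_eight_le_deltaM_sigmaWord hd,
    ⟨1 / 16, by norm_num, fun d hd => ?_⟩, ⟨5, lMeasure_sigmaWord_le⟩⟩
  have hlog := logb_length_sigmaWord_le d
  have hδ := sub_one_div_eight_le_deltaM_sigmaWord hd
  have hd' : (4 : ℝ) ≤ d := by exact_mod_cast hd
  calc 1 / 16 * Real.logb 2 (sigmaWord d).length ≤ 1 / 16 * (d + 1) := by gcongr
    _ ≤ ((d : ℝ) - 1) / 8 := by linarith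
    _ ≤ deltaM (sigmaWord d) := hδ
end

section
/- Let L = (V, R, S, τ, d, n) be an L-system of size ℓ that generates the full coded level, i.e., it generates w = τ(L_d) with n = |L_d|. Then there exists a context-free grammar (in the smallest-grammar sense) of size at most (d+1)·ℓ generating w. -/
/-- A context-free grammar (in the smallest-grammar sense) over the terminal
alphabet `T`: nonterminals `X_0, …, X_{r-1}`, one rule per nonterminal whose
right-hand side is a list of terminals (`Sum.inl`) and nonterminals
(`Sum.inr`). -/
structure CFG (T : Type) where
  r : ℕ
  rules : Fin r → List (T ⊕ Fin r)

/-- Well-formedness: each rule mentions only strictly earlier nonterminals. -/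
def CFG.WF {T : Type} (G : CFG T) : Prop :=
  ∀ k, ∀ s ∈ G.rules k, ∀ j, s = Sum.inr j → (j : ℕ) < (k : ℕ)

/-- The size of a grammar: total length of the right-hand sides. -/
def CFG.size {T : Type} (G : CFG T) : ℕ := ∑ k, (G.rules k).length

/-- The grammar generates `w`: the expansion function (terminals expand to
themselves, a nonterminal to the concatenation of the expansions of its
rule's symbols) maps the last nonterminal to `w`. -/
def CFGGenerates {T : Type} (G : CFG T) (w : List T) : Prop :=
  ∃ e : Fin G.r → List T,
    (∀ k, e k = (G.rules k).flatMap (Sum.elim (fun a => [a]) e)) ∧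
    ∃ h : 0 < G.r, e ⟨G.r - 1, Nat.sub_lt h Nat.one_pos⟩ = w

/-- `g(w)`: the size of the smallest context-free grammar generating `w`. -/
noncomputable def gMeasure {T : Type} (w : List T) : ℕ :=
  sInf { s | ∃ G : CFG T, G.WF ∧ CFGGenerates G w ∧ G.size = s }

/-!
Take a nonterminal `X_{i,A}` for every level `1 ≤ i ≤ d` and symbol `A`, with rules
`X_{1,A} → τ(R(A))` and `X_{i+1,A} → X_{i,B₁} ⋯ X_{i,Bₖ}` where `R(A) = B₁ ⋯ Bₖ`, so that `X_{i,A}`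
expands to `τ(Rⁱ(A))`; the start rule `X_{d,S₁} ⋯ X_{d,Sₘ}` (or `τ(S)` if `d = 0`) then expands to
`τ(L_d)`. Numbering the nonterminals level by level makes every rule refer only to earlier ones,
and the size is `d · Σ_A |R(A)| + |S| ≤ (d + 1) ℓ`.
-/
theorem iterate_morphApply {V : Type} (R : V → List V) (i : ℕ) (w : List V) :
    (morphApply R)^[i] w = w.flatMap fun B => (morphApply R)^[i] [B] := by
  induction i generalizing w with
  | zero => simp
  | succ i ih =>
    simp only [Function.iterate_succ_apply]
    rw [ih, morphApply, List.flatMap_assoc]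
    congr 1
    funext A
    rw [← ih]
    simp [morphApply]

theorem finProdFinEquiv_lt_of_fst_lt {m n : ℕ} {p q : Fin m × Fin n} (h : p.1 < q.1) :
    finProdFinEquiv p < finProdFinEquiv q := by
  rw [Fin.lt_def, finProdFinEquiv_apply_val, finProdFinEquiv_apply_val]
  have hq : n * p.1 + n ≤ n * q.1 := by simpa [mul_add] using Nat.mul_le_mul_left n h
  have hp := p.2.isLt
  omega

namespace CFG

variable {T N : Type} {r : ℕ} (ι : N ≃ Fin r) (ρ : N → List (T ⊕ N)) (s : List (T ⊕ N))

def startRules : Fin (r + 1) → List (T ⊕ Fin (r + 1)) :=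
  Fin.lastCases (s.map (Sum.map id (Fin.castSucc ∘ ι)))
    fun k => (ρ (ι.symm k)).map (Sum.map id (Fin.castSucc ∘ ι))

@[simp]
theorem startRules_last : startRules ι ρ s (Fin.last r) = s.map (Sum.map id (Fin.castSucc ∘ ι)) :=
  Fin.lastCases_last

@[simp]
theorem startRules_castSucc (k : Fin r) :
    startRules ι ρ s k.castSucc = (ρ (ι.symm k)).map (Sum.map id (Fin.castSucc ∘ ι)) :=
  Fin.lastCases_castSucc k

def withStart : CFG T := ⟨r + 1, startRules ι ρ s⟩

theorem withStart_size [Fintype N] : (withStart ι ρ s).size = ∑ n, (ρ n).length + s.length := by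
  change ∑ k, (startRules ι ρ s k).length = _
  rw [Fin.sum_univ_castSucc]
  simp only [startRules_castSucc, startRules_last, List.length_map]
  rw [Equiv.sum_comp ι.symm (fun n => (ρ n).length)]

theorem withStart_wf (hρ : ∀ n m, Sum.inr m ∈ ρ n → ι m < ι n) : (withStart ι ρ s).WF := by
  change ∀ k : Fin (r + 1), ∀ x ∈ startRules ι ρ s k, ∀ j, x = Sum.inr j → (j : ℕ) < k
  intro k
  induction k using Fin.lastCases with
  | last => simp
  | cast k =>
    simp only [startRules_castSucc, List.mem_map]
    rintro _ ⟨(a | n), hn, rfl⟩ j hj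
    · cases hj
    · cases hj
      simpa using hρ _ _ hn

theorem withStart_generates (e : N → List T)
    (he : ∀ n, e n = (ρ n).flatMap (Sum.elim (fun a => [a]) e)) :
    CFGGenerates (withStart ι ρ s) (s.flatMap (Sum.elim (fun a => [a]) e)) := by
  set e' : Fin (r + 1) → List T :=
    Fin.lastCases (s.flatMap (Sum.elim (fun a => [a]) e)) (e ∘ ι.symm)
  have helim : ∀ x, Sum.elim (fun a => [a]) e' (Sum.map id (Fin.castSucc ∘ ι) x) =
      Sum.elim (fun a => [a]) e x := by
    rintro (a | n) <;> simp [e']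
  refine ⟨e', ?_, r.succ_pos, Fin.lastCases_last⟩
  change ∀ k : Fin (r + 1), e' k = (startRules ι ρ s k).flatMap (Sum.elim (fun a => [a]) e')
  intro k
  induction k using Fin.lastCases with
  | last => simp only [startRules_last, List.flatMap_map, helim]; simp [e']
  | cast k => simp only [startRules_castSucc, List.flatMap_map, helim]; simp [e', he]

end CFG

namespace LSystem

variable {V Γ : Type} (L : LSystem V Γ)

/-- `levelSymbol i B` stands for `τ(Rⁱ(B))`: the terminal `τ(B)` if `i = 0`, the nonterminal
`(i - 1, B)` if `1 ≤ i ≤ d`; the last branch is never reached. -/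
def levelSymbol : ℕ → V → Γ ⊕ (Fin L.d × V)
  | 0, B => Sum.inl (L.coding B)
  | i + 1, B => if h : i < L.d then Sum.inr (⟨i, h⟩, B) else Sum.inl (L.coding B)

def levelRules (p : Fin L.d × V) : List (Γ ⊕ (Fin L.d × V)) :=
  (L.R p.2).map (L.levelSymbol p.1)

def levelExpansion (p : Fin L.d × V) : List Γ :=
  ((morphApply L.R)^[p.1 + 1] [p.2]).map L.coding

theorem lt_of_levelSymbol_eq_inr {i : ℕ} {B : V} {m : Fin L.d × V}
    (h : L.levelSymbol i B = Sum.inr m) : (m.1 : ℕ) < i := by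
  cases i with
  | zero => cases h
  | succ i =>
    rw [levelSymbol] at h
    split_ifs at h
    cases h
    exact Nat.lt_succ_self i

theorem expand_levelSymbol {i : ℕ} (hi : i ≤ L.d) (B : V) :
    Sum.elim (fun a => [a]) L.levelExpansion (L.levelSymbol i B) =
      ((morphApply L.R)^[i] [B]).map L.coding := by
  cases i with
  | zero => rfl
  | succ i => rw [levelSymbol, dif_pos (show i < L.d from hi)]; rfl

theorem flatMap_expand_levelSymbol {i : ℕ} (hi : i ≤ L.d) (w : List V) :
    (w.map (L.levelSymbol i)).flatMap (Sum.elim (fun a => [a]) L.levelExpansion) =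
      ((morphApply L.R)^[i] w).map L.coding := by
  rw [iterate_morphApply, List.map_flatMap, List.flatMap_map]
  exact congrArg (w.flatMap ·) (funext (L.expand_levelSymbol hi))

theorem levelExpansion_eq_flatMap (p : Fin L.d × V) :
    L.levelExpansion p = (L.levelRules p).flatMap (Sum.elim (fun a => [a]) L.levelExpansion) := by
  rw [levelRules, L.flatMap_expand_levelSymbol p.1.isLt.le, levelExpansion,
    Function.iterate_succ_apply]
  simp [morphApply]

variable [Fintype V]

noncomputable def levelIndex : Fin L.d × V ≃ Fin (L.d * Fintype.card V) :=
  (Equiv.prodCongr (Equiv.refl _) (Fintype.equivFin V)).trans finProdFinEquiv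

theorem levelIndex_lt_of_mem_levelRules {p m : Fin L.d × V}
    (h : Sum.inr m ∈ L.levelRules p) : L.levelIndex m < L.levelIndex p := by
  obtain ⟨B, -, hB⟩ := List.mem_map.mp h
  exact finProdFinEquiv_lt_of_fst_lt (L.lt_of_levelSymbol_eq_inr hB)

theorem sum_length_levelRules :
    ∑ p, (L.levelRules p).length = L.d * ∑ A, (L.R A).length := by
  simp [levelRules, Fintype.sum_prod_type]

end LSystem

theorem lsystem_to_grammar_general {V Γ : Type} [Fintype V]
    (L : LSystem V Γ) :
    ∃ G : CFG Γ, G.WF ∧ CFGGenerates G ((L.level L.d).map L.coding) ∧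
      G.size ≤ (L.d + 1) * L.size := by
  refine ⟨CFG.withStart L.levelIndex L.levelRules (L.ax.map (L.levelSymbol L.d)),
    CFG.withStart_wf _ _ _ fun _ _ => L.levelIndex_lt_of_mem_levelRules, ?_, ?_⟩
  · rw [LSystem.level, ← L.flatMap_expand_levelSymbol le_rfl]
    exact CFG.withStart_generates _ _ _ _ L.levelExpansion_eq_flatMap
  · rw [CFG.withStart_size, L.sum_length_levelRules, List.length_map, LSystem.size]
    nlinarith [Nat.zero_le (L.d * L.ax.length), Nat.zero_le (∑ A, (L.R A).length)]

/-- For any L-system of size ℓ generating its full coded level d (i.e. with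
n = |L_d|, generating w = τ(L_d)), there is a context-free grammar of size at
most (d+1)·ℓ generating w. -/
theorem lsystem_to_grammar {V Γ : Type} [Fintype V]
    (L : LSystem V Γ) (hwf : L.WF) (hn : L.n = (L.level L.d).length) :
    ∃ G : CFG Γ, G.WF ∧ CFGGenerates G ((L.level L.d).map L.coding) ∧
      G.size ≤ (L.d + 1) * L.size :=
  lsystem_to_grammar_general L
end

section
/- Let F_1 = b, F_2 = a, F_{k+2} = F_{k+1}·F_k be the Fibonacci strings over {a,b}, and f_k = |F_k| the Fibonacci numbers. Then for every k ≥ 6, F_k = F_k[f_{k-2}+1, f_k-2] · c_1 c_2 · F_k[f_{k-2}+1, 2f_{k-2}], where c_1 c_2 = ba if k is odd and c_1 c_2 = ab if k is even. (Here x[i,j] denotes the substring of x from position i to position j, 1-indexed.) -/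
/-- 1-indexed substring `x[i,j]` of a string (empty if `j < i`). -/
def substr {α : Type} (w : List α) (i j : ℕ) : List α := (w.take j).drop (i - 1)

/-- The Fibonacci strings over {a, b}, encoded with a = `false`, b = `true`:
F₁ = b, F₂ = a, F_{k+2} = F_{k+1}·F_k. -/
def FibStr : ℕ → List Bool
  | 0 => []
  | 1 => [true]
  | 2 => [false]
  | k + 3 => FibStr (k + 2) ++ FibStr (k + 1)

/-!
Write `F_k = F_{k-1} F_{k-2} = F_{k-2} (F_{k-3} F_{k-2})`. The two products `F_{k-2} F_{k-3}` and
`F_{k-3} F_{k-2}` agree except for their last two letters, which are swapped; call the common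
prefix `u`. Then `F_k = F_{k-2} u c'` and `F_k = F_{k-1} F_{k-2} = u c F_{k-2}`, so the middle
factor `F_k[f_{k-2}+1, f_k-2]` is `u`. For `k ≥ 6`, `F_{k-2}` is a prefix of `F_{k-3} F_{k-2}`,
so `F_k[f_{k-2}+1, 2f_{k-2}] = F_{k-2}`.
-/

lemma substr_append {α : Type} (x y z : List α) :
    substr (x ++ y ++ z) (x.length + 1) (x.length + y.length) = y := by
  rw [substr, Nat.add_sub_cancel, ← List.length_append, List.take_left, List.drop_left]

lemma fibStr_add_three (n : ℕ) : FibStr (n + 3) = FibStr (n + 2) ++ FibStr (n + 1) := rfl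

def fibStrLastTwo (n : ℕ) : List Bool := if n % 2 = 0 then [true, false] else [false, true]

lemma fibStrLastTwo_add_two (n : ℕ) : fibStrLastTwo (n + 2) = fibStrLastTwo n := by
  simp [fibStrLastTwo]

lemma length_fibStrLastTwo (n : ℕ) : (fibStrLastTwo n).length = 2 := by
  unfold fibStrLastTwo; split <;> rfl

lemma exists_fibStr_eq_and_swap_eq (n : ℕ) : ∃ u : List Bool,
    FibStr (n + 3) = u ++ fibStrLastTwo (n + 3) ∧
    FibStr (n + 1) ++ FibStr (n + 2) = u ++ fibStrLastTwo (n + 4) := by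
  induction n with
  | zero => exact ⟨[], by decide, by decide⟩
  | succ n ih =>
    obtain ⟨u, hu, hswap⟩ := ih
    refine ⟨FibStr (n + 2) ++ u, ?_, ?_⟩
    · rw [fibStr_add_three, fibStr_add_three, List.append_assoc, hswap, List.append_assoc]
    · rw [hu, ← fibStrLastTwo_add_two (n + 3), List.append_assoc]

lemma fibStr_prefix_append_succ (n : ℕ) : FibStr (n + 4) <+: FibStr (n + 3) ++ FibStr (n + 4) := by
  have hprefix : FibStr (n + 2) <+: FibStr (n + 3) ++ FibStr (n + 2) :=
    (List.prefix_append _ _).trans (List.prefix_append _ _)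
  show FibStr (n + 3) ++ FibStr (n + 2) <+: FibStr (n + 3) ++ (FibStr (n + 3) ++ FibStr (n + 2))
  exact (List.prefix_append_right_inj _).mpr hprefix

/-- For every k ≥ 6,
F_k = F_k[f_{k-2}+1, f_k-2] · c₁c₂ · F_k[f_{k-2}+1, 2f_{k-2}],
where f_j = |F_j| and c₁c₂ = ba if k is odd, c₁c₂ = ab if k is even. -/
theorem fibonacci_string_self_reference (k : ℕ) (hk : 6 ≤ k) :
    FibStr k =
      substr (FibStr k) ((FibStr (k - 2)).length + 1) ((FibStr k).length - 2) ++
      (if k % 2 = 1 then [true, false] else [false, true]) ++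
      substr (FibStr k) ((FibStr (k - 2)).length + 1)
        (2 * (FibStr (k - 2)).length) := by
  obtain ⟨m, rfl⟩ : ∃ m, k = m + 6 := ⟨k - 6, by omega⟩
  rw [show m + 6 - 2 = m + 4 by omega]
  obtain ⟨u, hu, hswap⟩ := exists_fibStr_eq_and_swap_eq (m + 2)
  obtain ⟨v, hv⟩ := fibStr_prefix_append_succ m
  have hF : FibStr (m + 6) = FibStr (m + 4) ++ (FibStr (m + 3) ++ FibStr (m + 4)) := by
    rw [fibStr_add_three (m + 3), fibStr_add_three (m + 2), List.append_assoc]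
  have hmiddle : substr (FibStr (m + 6)) ((FibStr (m + 4)).length + 1)
      ((FibStr (m + 6)).length - 2) = u := by
    rw [hF, hswap, ← List.append_assoc]
    convert substr_append (FibStr (m + 4)) u (fibStrLastTwo (m + 6)) using 2
    simp only [List.length_append, length_fibStrLastTwo]; omega
  have hright : substr (FibStr (m + 6)) ((FibStr (m + 4)).length + 1)
      (2 * (FibStr (m + 4)).length) = FibStr (m + 4) := by
    rw [hF, ← hv, ← List.append_assoc, two_mul, substr_append]
  have hletters : (if (m + 6) % 2 = 1 then [true, false] else [false, true]) =
      fibStrLastTwo (m + 5) := by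
    rcases Nat.mod_two_eq_zero_or_one m with h | h <;> simp [fibStrLastTwo, Nat.add_mod, h]
  rw [hmiddle, hletters, hright, fibStr_add_three (m + 3), hu]
end
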